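/- Let S be a read-k per-read-monotone sequence over X = {x_1,...,x_n} with n ≥ 2, and suppose the c-th read S^{(c)} is monotonically increasing while the (c+1)-th read S^{(c+1)} is monotonically decreasing (both with respect to x_1 < ... < x_n). Then every element's c-th occurrence precedes every element's (c+1)-th occurrence in S; in particular S^{(c)} ends (with x_n) before S^{(c+1)} begins (with x_n). -/
import Mathlib


/-- Number of occurrences of the value `S ℓ` strictly before position `ℓ`
(so a first occurrence has `occIdx = 0`). -/
def occIdx {N n : ℕ} (S : Fin N → Fin n) (ℓ : Fin N) : ℕ :=
  (Finset.univ.filter fun p => p < ℓ ∧ S p = S ℓ).card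

/-- `S` is a read-`k` sequence: every element appears exactly `k` times. -/
def ReadK {N n : ℕ} (k : ℕ) (S : Fin N → Fin n) : Prop :=
  ∀ x : Fin n, (Finset.univ.filter fun ℓ => S ℓ = x).card = k

/-- The `c`-th read of `S` is monotonically increasing. -/
def IncrRead {N n : ℕ} (S : Fin N → Fin n) (c : ℕ) : Prop :=
  ∀ ℓ ℓ' : Fin N, occIdx S ℓ = c → occIdx S ℓ' = c → S ℓ < S ℓ' → ℓ < ℓ'

/-- The `c`-th read of `S` is monotonically decreasing. -/
def DecrRead {N n : ℕ} (S : Fin N → Fin n) (c : ℕ) : Prop :=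
  ∀ ℓ ℓ' : Fin N, occIdx S ℓ = c → occIdx S ℓ' = c → S ℓ < S ℓ' → ℓ' < ℓ

/-- `S` is per-read-monotone: each read is increasing or decreasing. -/
def PerReadMono {N n : ℕ} (k : ℕ) (S : Fin N → Fin n) : Prop :=
  ∀ c : ℕ, c < k → IncrRead S c ∨ DecrRead S c

lemma occIdx_lt_occIdx {N n : ℕ} (S : Fin N → Fin n) {p q : Fin N}
    (hpq : p < q) (hS : S p = S q) : occIdx S p < occIdx S q := by
  apply Finset.card_lt_card
  constructor
  · intro r hr
    simp only [Finset.mem_filter, Finset.mem_univ, true_and] at hr ⊢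
    exact ⟨hr.1.trans hpq, hr.2.trans hS⟩
  · intro hsub
    have hp : p ∈ Finset.univ.filter fun r => r < q ∧ S r = S q := by
      simp [hpq, hS]
    have := hsub hp
    simp only [Finset.mem_filter, Finset.mem_univ, true_and] at this
    exact absurd this.1 (lt_irrefl p)

lemma lt_of_occIdx_lt {N n : ℕ} (S : Fin N → Fin n) {p q : Fin N}
    (h : occIdx S p < occIdx S q) (hS : S p = S q) : p < q := by
  rcases lt_trichotomy p q with h' | h' | h'
  · exact h'
  · subst h'; exact absurd h (lt_irrefl _)
  · exact absurd (occIdx_lt_occIdx S h' hS.symm) (by omega)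

lemma occIdx_lt_k {N n k : ℕ} (S : Fin N → Fin n) (h1 : ReadK k S) (p : Fin N) :
    occIdx S p < k := by
  have hsub : (Finset.univ.filter fun r => r < p ∧ S r = S p) ⊆
      (Finset.univ.filter fun r => S r = S p).erase p := by
    intro r hr
    simp only [Finset.mem_filter, Finset.mem_univ, true_and, Finset.mem_erase] at hr ⊢
    exact ⟨ne_of_lt hr.1, hr.2⟩
  have hk := h1 (S p)
  have hmem : p ∈ Finset.univ.filter fun r => S r = S p := by simp
  have := Finset.card_le_card hsub
  have herase := Finset.card_erase_of_mem hmem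
  have hpos : 0 < (Finset.univ.filter fun r => S r = S p).card := Finset.card_pos.mpr ⟨p, hmem⟩
  unfold occIdx
  omega

lemma exists_occ {N n k : ℕ} (S : Fin N → Fin n) (h1 : ReadK k S) (x : Fin n)
    {j : ℕ} (hj : j < k) : ∃ p, S p = x ∧ occIdx S p = j := by
  classical
  set T := Finset.univ.filter fun r => S r = x with hT
  have hcard : T.card = k := h1 x
  have hmaps : ∀ p ∈ T, occIdx S p ∈ Finset.range k := by
    intro p _; exact Finset.mem_range.mpr (occIdx_lt_k S h1 p)
  have hinj : ∀ p ∈ T, ∀ q ∈ T, occIdx S p = occIdx S q → p = q := by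
    intro p hp q hq h
    simp only [hT, Finset.mem_filter, Finset.mem_univ, true_and] at hp hq
    rcases lt_trichotomy p q with h' | h' | h'
    · exact absurd (occIdx_lt_occIdx S h' (hp.trans hq.symm)) (by omega)
    · exact h'
    · exact absurd (occIdx_lt_occIdx S h' (hq.trans hp.symm)) (by omega)
  obtain ⟨p, hp, hpj⟩ := Finset.surj_on_of_inj_on_of_card_le (fun p _ => occIdx S p)
    hmaps (fun p q hp hq h => hinj p hp q hq h) (by simp [hcard]) j (Finset.mem_range.mpr hj)
  simp only [hT, Finset.mem_filter, Finset.mem_univ, true_and] at hp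
  exact ⟨p, hp, hpj.symm⟩

/-- Key step of Proposition 2.5: if read `c` is increasing and read `c+1` is
decreasing, then every `c`-th occurrence precedes every `(c+1)`-th occurrence. -/
theorem stmt_9 {n k : ℕ} (S : Fin (k * n) → Fin n) (hn : 2 ≤ n)
    (c : ℕ) (hc : c + 1 < k)
    (h1 : ReadK k S) (h2 : PerReadMono k S)
    (hinc : IncrRead S c) (hdec : DecrRead S (c + 1)) :
    ∀ ℓ ℓ' : Fin (k * n), occIdx S ℓ = c → occIdx S ℓ' = c + 1 → ℓ < ℓ' := by
  intro ℓ ℓ' hℓ hℓ'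
  rcases lt_trichotomy (S ℓ) (S ℓ') with h | h | h
  · obtain ⟨a, ha, haocc⟩ := exists_occ S h1 (S ℓ') (show c < k by omega)
    have h1' : ℓ < a := hinc ℓ a hℓ haocc (ha ▸ h)
    have h2' : a < ℓ' := lt_of_occIdx_lt S (by omega) ha
    exact h1'.trans h2'
  · exact lt_of_occIdx_lt S (by omega) h
  · obtain ⟨b, hb, hbocc⟩ := exists_occ S h1 (S ℓ) hc
    have h1' : ℓ < b := lt_of_occIdx_lt S (by omega) hb.symm
    have h2' : b < ℓ' := hdec ℓ' b hℓ' hbocc (hb ▸ h)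
    exact h1'.trans h2'
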